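/- arXiv:1501.01493 — 2 statements merged into one kernel-verified Lean document; each statement's English description precedes it below -/
import Mathlib

section
/- If V: ℝ → ℝ is three times differentiable with V''' ≥ 0 (convex first derivative), then Q(s) = s²V''(yⁿ+s) − 2sV'(yⁿ+s) + 2V(yⁿ+s) − 2V(yⁿ) satisfies Q'(s) = s²V'''(yⁿ+s) ≥ 0, Q(0) = 0, and hence s³·Q(s) has constant sign structure making F''(s) = ξ·Q(s)/s³ ≥ 0 for all s ≠ 0; i.e., F is convex on each of (−∞,0) and (0,∞). -/
/-!
Write `g s = (V (y + s) - V y) / s` for the secant slope of `V` at `y`, so that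
`F = ξ g + s - 2 qⁿ`. Differentiating twice gives `g'' s = Q s / s³`, and `Q' s = s² V''' (y + s)`:
all terms except the last cancel. Hence `Q` is monotone with `Q 0 = 0`, so `Q s` has the sign of `s`
and `s³`, which makes `g` (and with it `F`, as `ξ ≥ 0`) convex on either side of `0`.
-/

-- `s³` times the second derivative of the secant slope `s ↦ (V (y + s) - V y) / s`.
noncomputable def secantSlopeCurvature (V : ℝ → ℝ) (y s : ℝ) : ℝ :=
  s ^ 2 * iteratedDeriv 2 V (y + s) - 2 * s * deriv V (y + s) + 2 * V (y + s) - 2 * V y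

section

variable {V : ℝ → ℝ} {y : ℝ}

lemma hasDerivAt_iteratedDeriv_const_add {n : ℕ} (hV : ContDiff ℝ (n + 1) V) (a s : ℝ) :
    HasDerivAt (fun t => iteratedDeriv n V (a + t)) (iteratedDeriv (n + 1) V (a + s)) s := by
  rw [iteratedDeriv_succ]
  exact ((hV.differentiable_iteratedDeriv' n) (a + s)).hasDerivAt.comp_const_add a s

lemma hasDerivAt_secantSlopeCurvature (hV : ContDiff ℝ 3 V) (s : ℝ) :
    HasDerivAt (secantSlopeCurvature V y) (s ^ 2 * iteratedDeriv 3 V (y + s)) s := by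
  have hV0 := hasDerivAt_iteratedDeriv_const_add (n := 0) (hV.of_le (by norm_num)) y s
  have hV1 := hasDerivAt_iteratedDeriv_const_add (n := 1) (hV.of_le (by norm_num)) y s
  have hV2 := hasDerivAt_iteratedDeriv_const_add (n := 2) hV y s
  simp only [iteratedDeriv_zero, iteratedDeriv_one, zero_add, Nat.reduceAdd] at hV0 hV1 hV2
  refine ((((hasDerivAt_pow 2 s).mul hV2).sub (((hasDerivAt_id s).const_mul 2).mul hV1)).add
    (hV0.const_mul 2)).sub_const (2 * V y) |>.congr_deriv ?_
  simp only [id, Nat.cast_ofNat]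
  ring

lemma secantSlopeCurvature_zero : secantSlopeCurvature V y 0 = 0 := by
  simp [secantSlopeCurvature]

lemma monotone_secantSlopeCurvature (hV : ContDiff ℝ 3 V)
    (hV3 : ∀ x, 0 ≤ iteratedDeriv 3 V x) : Monotone (secantSlopeCurvature V y) :=
  monotone_of_hasDerivAt_nonneg (hasDerivAt_secantSlopeCurvature hV)
    fun s => mul_nonneg (sq_nonneg s) (hV3 _)

lemma div_pow_three_nonneg_of_monotone {f : ℝ → ℝ} (hf : Monotone f) (h0 : f 0 = 0) (s : ℝ) :
    0 ≤ f s / s ^ 3 := by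
  rcases le_total s 0 with hs | hs
  · exact div_nonneg_of_nonpos (h0 ▸ hf hs) (Odd.pow_nonpos (by decide) hs)
  · exact div_nonneg (h0 ▸ hf hs) (pow_nonneg hs 3)

lemma hasDerivAt_secantSlope (hV : Differentiable ℝ V) {s : ℝ} (hs : s ≠ 0) :
    HasDerivAt (fun t => (V (y + t) - V y) / t)
      ((s * deriv V (y + s) - (V (y + s) - V y)) / s ^ 2) s := by
  refine (((hV (y + s)).hasDerivAt.comp_const_add y s).sub_const (V y)).div (hasDerivAt_id s) hs
    |>.congr_deriv ?_
  simp only [id]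
  ring

lemma hasDerivAt_deriv_secantSlope (hV : ContDiff ℝ 2 V) {s : ℝ} (hs : s ≠ 0) :
    HasDerivAt (fun t => (t * deriv V (y + t) - (V (y + t) - V y)) / t ^ 2)
      (secantSlopeCurvature V y s / s ^ 3) s := by
  have hV0 := hasDerivAt_iteratedDeriv_const_add (n := 0) (hV.of_le (by norm_num)) y s
  have hV1 := hasDerivAt_iteratedDeriv_const_add (n := 1) hV y s
  simp only [iteratedDeriv_zero, iteratedDeriv_one, zero_add, Nat.reduceAdd] at hV0 hV1
  refine ((hasDerivAt_id s).mul hV1).sub (hV0.sub_const (V y)) |>.div (hasDerivAt_pow 2 s)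
    (pow_ne_zero 2 hs) |>.congr_deriv ?_
  simp only [secantSlopeCurvature, Pi.mul_apply, Pi.sub_apply, id, Nat.cast_ofNat]
  field_simp
  ring

lemma convexOn_secantSlope (hV : ContDiff ℝ 3 V) (hV3 : ∀ x, 0 ≤ iteratedDeriv 3 V x)
    {D : Set ℝ} (hD : Convex ℝ D) (h0 : (0 : ℝ) ∉ D) :
    ConvexOn ℝ D (fun s => (V (y + s) - V y) / s) := by
  have hne : ∀ s ∈ D, s ≠ 0 := fun s hs h => h0 (h ▸ hs)
  have hV1 : Differentiable ℝ V := hV.differentiable (by norm_num)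
  refine convexOn_of_hasDerivWithinAt2_nonneg hD
    (fun s hs => (hasDerivAt_secantSlope hV1 (hne s hs)).continuousAt.continuousWithinAt)
    (fun s hs => (hasDerivAt_secantSlope hV1 (hne s (interior_subset hs))).hasDerivWithinAt)
    (fun s hs => (hasDerivAt_deriv_secantSlope (hV.of_le (by norm_num))
      (hne s (interior_subset hs))).hasDerivWithinAt)
    fun s _ => div_pow_three_nonneg_of_monotone (monotone_secantSlopeCurvature hV hV3)
      secantSlopeCurvature_zero s

end

/-- For V three times continuously differentiable with V''' ≥ 0, the function
Q(s) = s²V''(yⁿ+s) − 2sV'(yⁿ+s) + 2V(yⁿ+s) − 2V(yⁿ) satisfies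
Q'(s) = s²V'''(yⁿ+s) ≥ 0, Q(0) = 0, and F''(s) = ξQ(s)/s³ ≥ 0 for s ≠ 0;
i.e. F is convex on each of (−∞,0) and (0,∞). -/
theorem stmt4 (V : ℝ → ℝ) (hV : ContDiff ℝ 3 V)
    (hV3 : ∀ x : ℝ, 0 ≤ iteratedDeriv 3 V x)
    (yn qn ξ : ℝ) (hξ : 0 ≤ ξ)
    (Q : ℝ → ℝ)
    (hQ : ∀ s : ℝ, Q s = s ^ 2 * iteratedDeriv 2 V (yn + s)
      - 2 * s * deriv V (yn + s) + 2 * V (yn + s) - 2 * V yn) :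
    (∀ s : ℝ, deriv Q s = s ^ 2 * iteratedDeriv 3 V (yn + s) ∧ 0 ≤ deriv Q s) ∧
    Q 0 = 0 ∧
    (∀ s : ℝ, s ≠ 0 → 0 ≤ ξ * Q s / s ^ 3) ∧
    ConvexOn ℝ (Set.Iio (0 : ℝ))
      (fun s : ℝ => ξ * (V (yn + s) - V yn) / s + s - 2 * qn) ∧
    ConvexOn ℝ (Set.Ioi (0 : ℝ))
      (fun s : ℝ => ξ * (V (yn + s) - V yn) / s + s - 2 * qn) := by
  obtain rfl : Q = secantSlopeCurvature V yn := funext hQ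
  have hQ' s := (hasDerivAt_secantSlopeCurvature (y := yn) hV s).deriv
  have hF {D : Set ℝ} (hD : Convex ℝ D) (h0 : (0 : ℝ) ∉ D) :
      ConvexOn ℝ D (fun s : ℝ => ξ * (V (yn + s) - V yn) / s + s - 2 * qn) := by
    have h := ((convexOn_secantSlope (y := yn) hV hV3 hD h0).smul hξ).add (convexOn_id hD)
      |>.add_const (-(2 * qn))
    refine h.congr fun s _ => ?_
    simp only [Pi.add_apply, id, smul_eq_mul]
    ring
  refine ⟨fun s => ⟨hQ' s, hQ' s ▸ mul_nonneg (sq_nonneg s) (hV3 _)⟩, secantSlopeCurvature_zero,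
    fun s _ => ?_, hF (convex_Iio 0) (lt_irrefl (0 : ℝ)),
    hF (convex_Ioi 0) (lt_irrefl (0 : ℝ))⟩
  rw [mul_div_assoc]
  exact mul_nonneg hξ (div_pow_three_nonneg_of_monotone (monotone_secantSlopeCurvature hV hV3)
    secantSlopeCurvature_zero s)
end

section
/- The componentwise nonlinear map F(s) = (I + D)s + 2(Dyⁿ − qⁿ) + ζ·G(s), where G(s)_i = (V̂(y_i^n + s_i) − V̂(y_i^n))/s_i (extended continuously to V̂'(y_i^n) at s_i = 0) with V̂ convex differentiable and ζ ≥ 0, and D symmetric positive definite, has at most one zero in ℝ^N. -/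
/-!
Subtracting the equations `F s = 0` and `F t = 0` and pairing with `s - t` gives
`(s - t) ⬝ (I + D)(s - t) = -ζ Σᵢ (sᵢ - tᵢ)(G(s)ᵢ - G(t)ᵢ)`. The left side is positive unless
`s = t`, since `I + D` is positive definite. The right side is nonpositive, because `G(s)ᵢ` is the
slope of the convex function `V̂` on the chord from `yᵢⁿ` to `yᵢⁿ + sᵢ` (a tangent slope when
`sᵢ = 0`), and such slopes are monotone in `sᵢ`.
-/

open Matrix

noncomputable def differenceQuotient (f : ℝ → ℝ) (y h : ℝ) : ℝ :=
  if h = 0 then deriv f y else (f (y + h) - f y) / h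

lemma differenceQuotient_of_ne_zero (f : ℝ → ℝ) (y : ℝ) {h : ℝ} (hh : h ≠ 0) :
    differenceQuotient f y h = slope f y (y + h) := by
  rw [differenceQuotient, if_neg hh, slope_def_field, add_sub_cancel_left]

lemma ConvexOn.monotone_differenceQuotient {f : ℝ → ℝ} (hf : ConvexOn ℝ Set.univ f) {y : ℝ}
    (hfy : DifferentiableAt ℝ f y) : Monotone (differenceQuotient f y) := by
  intro a b hab
  rcases hab.eq_or_lt with rfl | hlt
  · exact le_rfl
  by_cases ha : a = 0
  · subst ha
    rw [differenceQuotient, if_pos rfl, differenceQuotient_of_ne_zero f y hlt.ne']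
    exact hf.deriv_le_slope trivial trivial (by linarith) hfy
  by_cases hb : b = 0
  · subst hb
    rw [differenceQuotient_of_ne_zero f y ha, differenceQuotient, if_pos rfl, slope_comm]
    exact hf.slope_le_deriv trivial trivial (by linarith) hfy
  rw [differenceQuotient_of_ne_zero f y ha, differenceQuotient_of_ne_zero f y hb]
  exact hf.slope_mono trivial ⟨trivial, by simpa using ha⟩ ⟨trivial, by simpa using hb⟩
    (by linarith)

lemma dotProduct_sub_map_sub_nonneg {ι : Type*} [Fintype ι] {g : ι → ℝ → ℝ}
    (hg : ∀ i, Monotone (g i)) (s t : ι → ℝ) :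
    0 ≤ (s - t) ⬝ᵥ fun i => g i (s i) - g i (t i) := by
  refine Finset.sum_nonneg fun i _ => ?_
  rcases le_total (t i) (s i) with h | h
  · exact mul_nonneg (sub_nonneg.2 h) (sub_nonneg.2 (hg i h))
  · exact mul_nonneg_of_nonpos_of_nonpos (sub_nonpos.2 h) (sub_nonpos.2 (hg i h))

lemma injective_posDef_mulVec_add_monotone {ι : Type*} [Fintype ι] {A : Matrix ι ι ℝ}
    (hA : A.PosDef) (c : ι → ℝ) {Φ : (ι → ℝ) → ι → ℝ}
    (hΦ : ∀ s t, 0 ≤ (s - t) ⬝ᵥ (Φ s - Φ t)) :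
    Function.Injective fun s => A *ᵥ s + c + Φ s := by
  intro s t hst
  dsimp only at hst
  by_contra hne
  have hlin : A *ᵥ (s - t) = -(Φ s - Φ t) := by
    rw [mulVec_sub]
    linear_combination (norm := abel1) hst
  have hpos := hA.dotProduct_mulVec_pos (sub_ne_zero.2 hne)
  rw [star_trivial, hlin, dotProduct_neg] at hpos
  linarith [hΦ s t]

theorem stmt17_general (N : ℕ) (D : Matrix (Fin N) (Fin N) ℝ)
    (hD : D.PosDef) (ζ : ℝ) (hζ : 0 ≤ ζ) (Vh : ℝ → ℝ)
    (hVc : ConvexOn ℝ Set.univ Vh) (hVd : ContDiff ℝ 1 Vh)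
    (yn qn : Fin N → ℝ)
    (G : (Fin N → ℝ) → (Fin N → ℝ))
    (hG : ∀ s i, G s i = if s i = 0 then deriv Vh (yn i)
      else (Vh (yn i + s i) - Vh (yn i)) / s i)
    (F : (Fin N → ℝ) → (Fin N → ℝ))
    (hF : ∀ s, F s = (1 + D).mulVec s + (2 : ℝ) • (D.mulVec yn - qn) + ζ • G s) :
    ∀ s t : Fin N → ℝ, F s = 0 → F t = 0 → s = t := by
  intro s t hs ht
  have hG_mono : ∀ s t, 0 ≤ (s - t) ⬝ᵥ (ζ • G s - ζ • G t) := by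
    intro s t
    have hG' : ∀ u, G u = fun i => differenceQuotient Vh (yn i) (u i) := fun u =>
      funext (hG u)
    rw [← smul_sub, dotProduct_smul, smul_eq_mul, hG', hG']
    exact mul_nonneg hζ <| dotProduct_sub_map_sub_nonneg
      (fun i => hVc.monotone_differenceQuotient (hVd.differentiable one_ne_zero _)) s t
  refine injective_posDef_mulVec_add_monotone (PosDef.posSemidef_add PosSemidef.one hD)
    ((2 : ℝ) • (D *ᵥ yn - qn)) hG_mono ?_
  simp only [← hF, hs, ht]

/-- Uniqueness of the root of the distributed nonlinear system
F(s) = (I + D)s + 2(Dyⁿ − qⁿ) + ζG(s), with D symmetric positive definite,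
ζ ≥ 0 and V̂ convex continuously differentiable. -/
theorem stmt17 (N : ℕ) (hN : 1 ≤ N) (D : Matrix (Fin N) (Fin N) ℝ)
    (hD : D.PosDef) (ζ : ℝ) (hζ : 0 ≤ ζ) (Vh : ℝ → ℝ)
    (hVc : ConvexOn ℝ Set.univ Vh) (hVd : ContDiff ℝ 1 Vh)
    (yn qn : Fin N → ℝ)
    (G : (Fin N → ℝ) → (Fin N → ℝ))
    (hG : ∀ s i, G s i = if s i = 0 then deriv Vh (yn i)
      else (Vh (yn i + s i) - Vh (yn i)) / s i)
    (F : (Fin N → ℝ) → (Fin N → ℝ))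
    (hF : ∀ s, F s = (1 + D).mulVec s + (2 : ℝ) • (D.mulVec yn - qn) + ζ • G s) :
    ∀ s t : Fin N → ℝ, F s = 0 → F t = 0 → s = t :=
  stmt17_general N D hD ζ hζ Vh hVc hVd yn qn G hG F hF
end
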